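/- arXiv:1711.06950 — 3 statements merged into one kernel-verified Lean document; each statement's English description precedes it below -/
import Mathlib

section
/- Suppose the Laurent polynomial f = ∑_{i=−m}^{n} a_i X^i over L satisfies the annulus integrality conditions, and suppose f has no root z ∈ L with |π| < |z| < 1 (equivalently, every nonzero root z in L of the ordinary polynomial P(X) = X^m · f(X) ∈ L[X] satisfies |z| ≤ |π| or |z| ≥ 1). Then |a_0| = 1. -/
/-!
Put `P = X ^ m * f`. For `c > 0` the Gauss norm `‖P‖_c = max_j |P_j| c ^ j` is multiplicative, and
`‖X - z‖_c = max c |z|`; as `P` splits and has no root with `|π| < |z| < 1`, this gives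
`‖P‖_c = A c ^ s` for all `|π| ≤ c ≤ 1`, where `s` counts the roots in the disc `|z| ≤ |π|`.
Conditions (i)-(iii) say `‖P‖_c ≤ c ^ m` on this interval, with equality at `c = 1` and `c = |π|`,
so `A = 1` and `s = m`. For `|π| < c < 1`, condition (i) makes every term `|P_j| c ^ j` with
`j ≠ m` strictly smaller than `c ^ m = ‖P‖_c`, so the maximum is attained at `P_m = a_0`.
-/

open Polynomial

namespace Polynomial

section GaussNorm

variable {R : Type*} [Semiring R] (v : AbsoluteValue R ℝ) {c : ℝ}

theorem gaussNorm_eq_of_forall_le {p : R[X]} {B : ℝ} (hc : 0 ≤ c)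
    (hle : ∀ j, v (p.coeff j) * c ^ j ≤ B) (i : ℕ) (hi : v (p.coeff i) * c ^ i = B) :
    p.gaussNorm v c = B := by
  obtain ⟨j, hj⟩ := p.exists_eq_gaussNorm v c
  exact le_antisymm (hj ▸ hle j) (hi ▸ p.le_gaussNorm v hc i)

theorem gaussNorm_X_sub_C {R : Type*} [Ring R] [Nontrivial R] (v : AbsoluteValue R ℝ) (hc : 0 ≤ c) (z : R) :
    (X - C z).gaussNorm v c = max c (v z) := by
  have hcoeff : ∀ j, v ((X - C z).coeff j) * c ^ j ≤ max c (v z) := by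
    rintro (_ | _ | j) <;> simp [coeff_X, coeff_C]
  rcases le_total (v z) c with h | h
  · exact gaussNorm_eq_of_forall_le v hc hcoeff 1 (by simp [h])
  · exact gaussNorm_eq_of_forall_le v hc hcoeff 0 (by simp [h])

end GaussNorm

variable {R : Type*} [CommRing R] [IsDomain R] {v : AbsoluteValue R ℝ}

theorem gaussNorm_multiset_prod (hna : IsNonarchimedean v) {c : ℝ} (hc : 0 < c)
    (s : Multiset R[X]) : s.prod.gaussNorm v c = (s.map (gaussNorm v c)).prod :=
  have := gaussNorm_isAbsoluteValue hna hc
  map_multiset_prod (IsAbsoluteValue.toAbsoluteValue (gaussNorm v c)) s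

theorem exists_gaussNorm_eq_mul_pow (hna : IsNonarchimedean v) {P : R[X]} (hP : P.Splits)
    {r : ℝ} (hr : 0 < r) (hroots : ∀ z ∈ P.roots, v z ≤ r ∨ 1 ≤ v z) :
    ∃ (A : ℝ) (s : ℕ), ∀ c ∈ Set.Icc r 1, P.gaussNorm v c = A * c ^ s := by
  set S := P.roots.filter (v · ≤ r)
  set B := P.roots.filter (¬ v · ≤ r)
  refine ⟨v P.leadingCoeff * (B.map v).prod, Multiset.card S, fun c ⟨hrc, hc1⟩ => ?_⟩
  have hc : 0 < c := hr.trans_le hrc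
  have hS : (S.map fun z => max c (v z)).prod = c ^ Multiset.card S := by
    rw [Multiset.map_congr rfl fun z hz => max_eq_left ((Multiset.of_mem_filter hz).trans hrc),
      Multiset.map_const', Multiset.prod_replicate]
  have hB : (B.map fun z => max c (v z)) = B.map v := by
    refine Multiset.map_congr rfl fun z hz => max_eq_right (hc1.trans ?_)
    obtain ⟨hz, hzr⟩ := Multiset.mem_filter.1 hz
    exact (hroots z hz).resolve_left hzr
  have hsplit : P.roots = S + B := (Multiset.filter_add_not _ _).symm
  conv_lhs => rw [hP.eq_prod_roots]
  rw [gaussNorm_mul hna hc, gaussNorm_C, gaussNorm_multiset_prod hna hc, Multiset.map_map, hsplit]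
  simp only [Function.comp_def, gaussNorm_X_sub_C v hc.le, Multiset.map_add, Multiset.prod_add,
    hS, hB]
  ring

end Polynomial

theorem mul_zpow_le_one_of_le_min {x r c : ℝ} {i : ℤ} (hr : 0 < r) (hrc : r ≤ c) (hc1 : c ≤ 1)
    (hx : x ≤ min 1 (r ^ (-i))) : x * c ^ i ≤ 1 := by
  have hc : 0 < c := hr.trans_le hrc
  rcases le_or_gt 0 i with hi | hi
  · calc x * c ^ i ≤ 1 * 1 := by
          gcongr
          exacts [hx.trans (min_le_left _ _), zpow_le_one₀ hc hc1 hi]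
      _ = 1 := one_mul 1
  · calc x * c ^ i ≤ r ^ (-i) * c ^ i := by gcongr; exact hx.trans (min_le_right _ _)
      _ = (r / c) ^ (-i) := by rw [div_zpow, zpow_neg c, div_inv_eq_mul]
      _ ≤ 1 := zpow_le_one₀ (div_pos hr hc) ((div_le_one hc).2 hrc) (by omega)

theorem mul_zpow_lt_one_of_le_min {x r c : ℝ} {i : ℤ} (hr : 0 < r) (hrc : r < c) (hc1 : c < 1)
    (hx : x ≤ min 1 (r ^ (-i))) (hi : i ≠ 0) : x * c ^ i < 1 := by
  have hc : 0 < c := hr.trans hrc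
  rcases lt_or_gt_of_ne hi with hi | hi
  · calc x * c ^ i ≤ r ^ (-i) * c ^ i := by gcongr; exact hx.trans (min_le_right _ _)
      _ = (r / c) ^ (-i) := by rw [div_zpow, zpow_neg c, div_inv_eq_mul]
      _ < 1 := zpow_lt_one₀ (div_pos hr hc) ((div_lt_one hc).2 hrc) (by omega)
  · calc x * c ^ i ≤ 1 * c ^ i := by gcongr; exact hx.trans (min_le_left _ _)
      _ < 1 := by rw [one_mul]; exact zpow_lt_one₀ hc hc1 hi

/-- `X ^ m * ∑_{i = -m}^{n} a i * X ^ i`. -/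
noncomputable def laurentNumerator {R : Type*} [Semiring R] (a : ℤ → R) (m n : ℕ) : R[X] :=
  ∑ i ∈ Finset.Icc (-(m : ℤ)) n, C (a i) * X ^ (i + m).toNat

section LaurentNumerator

theorem coeff_laurentNumerator {R : Type*} [Semiring R] (a : ℤ → R) (m n j : ℕ) :
    (laurentNumerator a m n).coeff j = if (j : ℤ) - m ≤ n then a (j - m) else 0 := by
  have hcond : ∀ i ∈ Finset.Icc (-(m : ℤ)) n, (j = (i + m).toNat ↔ (j : ℤ) - m = i) := by
    intro i hi
    rw [Finset.mem_Icc] at hi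
    omega
  simp only [laurentNumerator, finsetSum_coeff, coeff_C_mul_X_pow]
  rw [Finset.sum_congr rfl fun i hi => if_congr (hcond i hi) rfl rfl, Finset.sum_ite_eq]
  simp

theorem eval_laurentNumerator {K : Type*} [Field K] (a : ℤ → K) (m n : ℕ) {z : K} (hz : z ≠ 0) :
    (laurentNumerator a m n).eval z = z ^ m * ∑ i ∈ Finset.Icc (-(m : ℤ)) n, a i * z ^ i := by
  simp only [laurentNumerator, eval_finsetSum, eval_mul, eval_C, eval_pow, eval_X, Finset.mul_sum]
  refine Finset.sum_congr rfl fun i hi => ?_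
  have hi : 0 ≤ i + m := by rw [Finset.mem_Icc] at hi; omega
  rw [← zpow_natCast, Int.toNat_of_nonneg hi, zpow_add₀ hz, zpow_natCast]
  ring

theorem abv_le_or_one_le_of_mem_roots_laurentNumerator {K : Type*} [Field K]
    {v : AbsoluteValue K ℝ} {a : ℤ → K} {m n : ℕ} {r : ℝ} (hr : 0 ≤ r)
    (hroot : ∀ z : K, z ≠ 0 → ∑ i ∈ Finset.Icc (-(m : ℤ)) n, a i * z ^ i = 0 →
      ¬ (r < v z ∧ v z < 1)) :
    ∀ z ∈ (laurentNumerator a m n).roots, v z ≤ r ∨ 1 ≤ v z := by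
  intro z hz
  rcases eq_or_ne z 0 with rfl | hz0
  · simp [hr]
  have hf := (isRoot_of_mem_roots hz).eq_zero
  rw [eval_laurentNumerator a m n hz0] at hf
  by_contra! h
  exact hroot z hz0 ((mul_eq_zero.1 hf).resolve_left (pow_ne_zero m hz0)) h

variable {R : Type*} [Semiring R] (v : AbsoluteValue R ℝ) {a : ℤ → R} {m n : ℕ} {r c : ℝ}

theorem abv_coeff_laurentNumerator_mul_pow {i : ℤ} (hc : c ≠ 0) (hmi : -(m : ℤ) ≤ i)
    (hin : i ≤ n) :
    v ((laurentNumerator a m n).coeff (i + m).toNat) * c ^ (i + m).toNat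
      = c ^ m * (v (a i) * c ^ i) := by
  have hj : ((i + m).toNat : ℤ) = i + m := Int.toNat_of_nonneg (by omega)
  rw [coeff_laurentNumerator, if_pos (by omega), ← zpow_natCast c (i + m).toNat, hj,
    zpow_add₀ hc, add_sub_cancel_right, zpow_natCast]
  ring

variable (hbound : ∀ i : ℤ, -(m : ℤ) ≤ i → i ≤ n → v (a i) ≤ min 1 (r ^ (-i)))
include hbound

theorem abv_coeff_laurentNumerator_mul_pow_le (hr : 0 < r) (hrc : r ≤ c) (hc1 : c ≤ 1) (j : ℕ) :
    v ((laurentNumerator a m n).coeff j) * c ^ j ≤ c ^ m := by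
  have hc : 0 < c := hr.trans_le hrc
  by_cases hjn : (j : ℤ) - m ≤ n
  · have hj := abv_coeff_laurentNumerator_mul_pow v (a := a) (m := m) (i := j - m) hc.ne' (by omega) hjn
    simp only [sub_add_cancel, Int.toNat_natCast] at hj
    rw [hj]
    exact mul_le_of_le_one_right (by positivity)
      (mul_zpow_le_one_of_le_min hr hrc hc1 (hbound _ (by omega) hjn))
  · rw [coeff_laurentNumerator, if_neg hjn, v.map_zero, zero_mul]
    positivity

theorem abv_coeff_laurentNumerator_mul_pow_lt (hr : 0 < r) (hrc : r < c) (hc1 : c < 1) {j : ℕ}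
    (hjm : j ≠ m) : v ((laurentNumerator a m n).coeff j) * c ^ j < c ^ m := by
  have hc : 0 < c := hr.trans hrc
  by_cases hjn : (j : ℤ) - m ≤ n
  · have hj := abv_coeff_laurentNumerator_mul_pow v (a := a) (m := m) (i := j - m) hc.ne' (by omega) hjn
    simp only [sub_add_cancel, Int.toNat_natCast] at hj
    rw [hj]
    exact mul_lt_of_lt_one_right (by positivity)
      (mul_zpow_lt_one_of_le_min hr hrc hc1 (hbound _ (by omega) hjn) (by omega))
  · rw [coeff_laurentNumerator, if_neg hjn, v.map_zero, zero_mul]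
    positivity

theorem gaussNorm_laurentNumerator_eq_pow (hr : 0 < r) (hrc : r ≤ c) (hc1 : c ≤ 1) {i : ℤ}
    (hmi : -(m : ℤ) ≤ i) (hin : i ≤ n) (hi : v (a i) * c ^ i = 1) :
    (laurentNumerator a m n).gaussNorm v c = c ^ m := by
  have hc : 0 < c := hr.trans_le hrc
  refine gaussNorm_eq_of_forall_le v hc.le
    (abv_coeff_laurentNumerator_mul_pow_le v hbound hr hrc hc1) (i + m).toNat ?_
  rw [abv_coeff_laurentNumerator_mul_pow v hc.ne' hmi hin, hi, mul_one]

theorem abv_zero_eq_one_of_gaussNorm_laurentNumerator_eq_pow (hr : 0 < r) (hrc : r < c)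
    (hc1 : c < 1) (hnorm : (laurentNumerator a m n).gaussNorm v c = c ^ m) : v (a 0) = 1 := by
  have hc : c ≠ 0 := (hr.trans hrc).ne'
  obtain ⟨j, hj⟩ := (laurentNumerator a m n).exists_eq_gaussNorm v c
  have hjm : j = m := by_contra fun hjm =>
    (abv_coeff_laurentNumerator_mul_pow_lt v hbound hr hrc hc1 hjm).ne' (hnorm ▸ hj)
  rw [hjm, hnorm] at hj
  have h0 := abv_coeff_laurentNumerator_mul_pow v (a := a) (m := m) (n := n) (i := 0) hc
    (by omega) (by omega)
  simp only [zero_add, Int.toNat_natCast, zpow_zero, mul_one, ← hj] at h0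
  exact (mul_eq_left₀ (pow_ne_zero m hc)).1 h0.symm

end LaurentNumerator

theorem vologodsky_stmt_0_general
    {L : Type*} [Field L] [IsAlgClosed L]
    (v : AbsoluteValue L ℝ)
    (hna : ∀ x y : L, v (x + y) ≤ max (v x) (v y))
    (π : L) (hπ0 : 0 < v π) (hπ1 : v π < 1)
    (m n : ℕ) (a : ℤ → L)
    (h_i : ∀ i : ℤ, -(m : ℤ) ≤ i → i ≤ (n : ℤ) → v (a i) ≤ min 1 (v π ^ (-i)))
    (h_ii : ∃ i : ℤ, 0 ≤ i ∧ i ≤ (n : ℤ) ∧ v (a i) = 1)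
    (h_iii : ∃ i : ℤ, -(m : ℤ) ≤ i ∧ i ≤ 0 ∧ v (a i) = v π ^ (-i))
    (hroot : ∀ z : L, z ≠ 0 →
      (∑ i ∈ Finset.Icc (-(m : ℤ)) (n : ℤ), a i * z ^ i) = 0 →
      ¬ (v π < v z ∧ v z < 1)) :
    v (a 0) = 1 := by
  set r := v π
  obtain ⟨A, s, hA⟩ := exists_gaussNorm_eq_mul_pow hna (IsAlgClosed.splits _) hπ0
    (abv_le_or_one_le_of_mem_roots_laurentNumerator hπ0.le hroot)
  have hnorm_one : (laurentNumerator a m n).gaussNorm v 1 = 1 := by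
    obtain ⟨i, hi0, hin, hi⟩ := h_ii
    simpa using gaussNorm_laurentNumerator_eq_pow v h_i hπ0 hπ1.le le_rfl (by omega) hin
      (by simp [hi])
  have hnorm_r : (laurentNumerator a m n).gaussNorm v r = r ^ m := by
    obtain ⟨i, hmi, hi0, hi⟩ := h_iii
    exact gaussNorm_laurentNumerator_eq_pow v h_i hπ0 le_rfl hπ1.le hmi (by omega)
      (by rw [hi, zpow_neg, inv_mul_cancel₀ (zpow_ne_zero i hπ0.ne')])
  have hA1 : A = 1 := by simpa [hnorm_one] using (hA 1 ⟨hπ1.le, le_rfl⟩).symm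
  have hsm : s = m := pow_right_injective₀ hπ0 hπ1.ne <| by
    simpa [hA1, hnorm_r] using (hA r ⟨le_rfl, hπ1.le⟩).symm
  obtain ⟨c, hrc, hc1⟩ := exists_between hπ1
  exact abv_zero_eq_one_of_gaussNorm_laurentNumerator_eq_pow v h_i hπ0 hrc hc1
    (by rw [hA c ⟨hrc.le, hc1.le⟩, hA1, hsm, one_mul])

/-- Let `L` be an algebraically closed field with a nonarchimedean absolute value `v`,
and `π ∈ L` with `0 < |π| < 1`.  If the Laurent polynomial `f = ∑_{i=-m}^{n} a_i X^i`
satisfies the annulus integrality conditions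
(`|a_i| ≤ min 1 |π|^{-i}`, some `0 ≤ i ≤ n` with `|a_i| = 1`,
some `-m ≤ i ≤ 0` with `|a_i| = |π|^{-i}`),
and `f` has no root `z` with `|π| < |z| < 1`, then `|a_0| = 1`. -/
theorem vologodsky_stmt_0
    {L : Type*} [Field L] [IsAlgClosed L]
    (v : AbsoluteValue L ℝ)
    (hna : ∀ x y : L, v (x + y) ≤ max (v x) (v y))
    (π : L) (hπ0 : 0 < v π) (hπ1 : v π < 1)
    (m n : ℕ) (a : ℤ → L)
    (hsupp : ∀ i : ℤ, (i < -(m : ℤ) ∨ (n : ℤ) < i) → a i = 0)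
    (h_i : ∀ i : ℤ, -(m : ℤ) ≤ i → i ≤ (n : ℤ) → v (a i) ≤ min 1 (v π ^ (-i)))
    (h_ii : ∃ i : ℤ, 0 ≤ i ∧ i ≤ (n : ℤ) ∧ v (a i) = 1)
    (h_iii : ∃ i : ℤ, -(m : ℤ) ≤ i ∧ i ≤ 0 ∧ v (a i) = v π ^ (-i))
    (hroot : ∀ z : L, z ≠ 0 →
      (∑ i ∈ Finset.Icc (-(m : ℤ)) (n : ℤ), a i * z ^ i) = 0 →
      ¬ (v π < v z ∧ v z < 1)) :
    v (a 0) = 1 :=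
  vologodsky_stmt_0_general v hna π hπ0 hπ1 m n a h_i h_ii h_iii hroot
end

section
/- Let f = ∑_i a_i X^i be an element of the annulus ring R. Then: (1) f is divisible by X in R if and only if ν(a_i) ≥ 1 − i for every i ≤ 0; (2) f is divisible by πX^{−1} in R if and only if ν(a_i) ≥ 1 for every i ≥ 0. Consequently, f is divisible by neither X nor πX^{−1} in R if and only if there exists i ≥ 0 with ν(a_i) = 0 and there exists i ≤ 0 with ν(a_i) = −i. -/
/-!
Multiplication by `c Tⁿ` with `c ≠ 0` is a bijection of `K[T,T⁻¹]` which shifts the coefficients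
by `n` and, by multiplicativity of `ν`, adds `ν c` to their valuations. Hence `f` is divisible in `R`
by `c Tⁿ` exactly when `ν(aⱼ) ≥ max(0, n - j) + ν(c)` for all `j`. For `X` and `πX⁻¹` the
inequalities for `j > 0`, resp. `j < 0`, already hold because `f ∈ R`, which leaves (1) and (2);
the last claim is their negation, using `ν(aᵢ) ≥ 0` for `i ≥ 0` and `ν(aᵢ) ≥ -i` for `i ≤ 0`.
-/

/-- Membership in the annulus ring `R ⊆ K[X,X⁻¹]`: a Laurent polynomial
`f = ∑ aᵢ Xⁱ` lies in `R` iff every coefficient satisfies `ν(aᵢ) ≥ max(0, -i)`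
(with the convention that zero coefficients satisfy every such inequality). -/
def MemAnnulusRing {K : Type*} [Field K] (ν : K → ℤ)
    (f : LaurentPolynomial K) : Prop :=
  ∀ i : ℤ, f.coeff i = 0 ∨ max 0 (-i) ≤ ν (f.coeff i)

open LaurentPolynomial

lemma LaurentPolynomial.coeff_C_mul_T_mul {R : Type*} [Semiring R] (c : R) (n j : ℤ)
    (g : R[T;T⁻¹]) : (C c * T n * g).coeff j = c * g.coeff (j - n) := by
  rw [← single_eq_C_mul_T, AddMonoidAlgebra.coeff_single_mul_apply, neg_add_eq_sub]

lemma LaurentPolynomial.C_mul_T_mul_C_inv_mul_T_neg_mul {K : Type*} [Field K] {c : K}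
    (hc : c ≠ 0) (n : ℤ) (f : K[T;T⁻¹]) : C c * T n * (C c⁻¹ * T (-n) * f) = f := by
  calc C c * T n * (C c⁻¹ * T (-n) * f) = C (c * c⁻¹) * T (n + -n) * f := by
        rw [map_mul, T_add]; ring
    _ = f := by rw [mul_inv_cancel₀ hc, add_neg_cancel, map_one, T_zero, one_mul, one_mul]

section Divisibility

variable {K : Type*} [Field K] {ν : K → ℤ}
  (hν_mul : ∀ x y : K, x ≠ 0 → y ≠ 0 → ν (x * y) = ν x + ν y)
include hν_mul

lemma memAnnulusRing_iff_C_mul_T_mul {c : K} (hc : c ≠ 0) (n : ℤ) (g : K[T;T⁻¹]) :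
    MemAnnulusRing ν g ↔ ∀ j : ℤ, (C c * T n * g).coeff j = 0 ∨
      max 0 (n - j) + ν c ≤ ν ((C c * T n * g).coeff j) := by
  have hν_c_mul {a : K} (ha : a ≠ 0) : ν (c * a) = ν c + ν a := hν_mul c a hc ha
  simp only [coeff_C_mul_T_mul, mul_eq_zero, hc, false_or]
  constructor
  · intro hg j
    rcases eq_or_ne (g.coeff (j - n)) 0 with h0 | h0
    · exact .inl h0
    · have := (hg (j - n)).resolve_left h0
      right; rw [hν_c_mul h0]; omega
  · intro h i
    rcases eq_or_ne (g.coeff i) 0 with h0 | h0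
    · exact .inl h0
    · have := (h (i + n)).resolve_left (by rwa [add_sub_cancel_right])
      rw [add_sub_cancel_right, hν_c_mul h0] at this
      right; omega

theorem exists_memAnnulusRing_eq_C_mul_T_mul_iff {c : K} (hc : c ≠ 0) (n : ℤ) (f : K[T;T⁻¹]) :
    (∃ g : K[T;T⁻¹], MemAnnulusRing ν g ∧ f = C c * T n * g) ↔
      ∀ j : ℤ, f.coeff j = 0 ∨ max 0 (n - j) + ν c ≤ ν (f.coeff j) := by
  constructor
  · rintro ⟨g, hg, rfl⟩
    exact (memAnnulusRing_iff_C_mul_T_mul hν_mul hc n g).1 hg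
  · intro h
    have hcancel := C_mul_T_mul_C_inv_mul_T_neg_mul hc n f
    refine ⟨C c⁻¹ * T (-n) * f, ?_, hcancel.symm⟩
    rw [memAnnulusRing_iff_C_mul_T_mul hν_mul hc n, hcancel]
    exact h

variable {f : K[T;T⁻¹]} (hf : MemAnnulusRing ν f)
include hf

theorem exists_memAnnulusRing_eq_T_one_mul_iff :
    (∃ g, MemAnnulusRing ν g ∧ f = T 1 * g) ↔
      ∀ i : ℤ, i ≤ 0 → f.coeff i = 0 ∨ 1 - i ≤ ν (f.coeff i) := by
  have hν_one : ν 1 = 0 := by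
    have := hν_mul 1 1 one_ne_zero one_ne_zero
    rw [one_mul] at this
    omega
  have := exists_memAnnulusRing_eq_C_mul_T_mul_iff hν_mul one_ne_zero 1 f
  rw [map_one, one_mul, hν_one] at this
  rw [this]
  refine forall_congr' fun j => ?_
  by_cases h0 : f.coeff j = 0
  · simp [h0]
  · have := (hf j).resolve_left h0
    simp only [h0, false_or, add_zero]
    omega

theorem exists_memAnnulusRing_eq_C_mul_T_neg_one_mul_iff {p : K} (hp : p ≠ 0) (hν_p : ν p = 1) :
    (∃ g, MemAnnulusRing ν g ∧ f = C p * T (-1) * g) ↔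
      ∀ i : ℤ, 0 ≤ i → f.coeff i = 0 ∨ 1 ≤ ν (f.coeff i) := by
  rw [exists_memAnnulusRing_eq_C_mul_T_mul_iff hν_mul hp, hν_p]
  refine forall_congr' fun j => ?_
  by_cases h0 : f.coeff j = 0
  · simp [h0]
  · have := (hf j).resolve_left h0
    simp only [h0, false_or]
    omega

end Divisibility

theorem vologodsky_stmt_2_general
    {O K : Type*} [CommRing O]
    [Field K] [Algebra O K] [IsFractionRing O K]
    (π : O) (hπ : Irreducible π)
    (ν : K → ℤ)
    (hν_mul : ∀ x y : K, x ≠ 0 → y ≠ 0 → ν (x * y) = ν x + ν y)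
    (hν_π : ν (algebraMap O K π) = 1)
    (f : LaurentPolynomial K) (hf : MemAnnulusRing ν f) :
    ((∃ g : LaurentPolynomial K, MemAnnulusRing ν g ∧
        f = LaurentPolynomial.T 1 * g) ↔
      (∀ i : ℤ, i ≤ 0 → f.coeff i = 0 ∨ 1 - i ≤ ν (f.coeff i))) ∧
    ((∃ g : LaurentPolynomial K, MemAnnulusRing ν g ∧
        f = LaurentPolynomial.C (algebraMap O K π) * LaurentPolynomial.T (-1) * g) ↔
      (∀ i : ℤ, 0 ≤ i → f.coeff i = 0 ∨ 1 ≤ ν (f.coeff i))) ∧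
    ((¬ (∃ g : LaurentPolynomial K, MemAnnulusRing ν g ∧
          f = LaurentPolynomial.T 1 * g) ∧
      ¬ (∃ g : LaurentPolynomial K, MemAnnulusRing ν g ∧
          f = LaurentPolynomial.C (algebraMap O K π) * LaurentPolynomial.T (-1) * g)) ↔
      ((∃ i : ℤ, 0 ≤ i ∧ f.coeff i ≠ 0 ∧ ν (f.coeff i) = 0) ∧
       (∃ i : ℤ, i ≤ 0 ∧ f.coeff i ≠ 0 ∧ ν (f.coeff i) = -i))) := by
  have hπ_ne : algebraMap O K π ≠ 0 :=
    (map_ne_zero_iff _ (IsFractionRing.injective O K)).mpr hπ.ne_zero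
  have hX := exists_memAnnulusRing_eq_T_one_mul_iff hν_mul hf
  have hπX := exists_memAnnulusRing_eq_C_mul_T_neg_one_mul_iff hν_mul hf hπ_ne hν_π
  refine ⟨hX, hπX, ?_⟩
  rw [hX, hπX, and_comm]
  push Not
  refine and_congr (exists_congr fun j => ?_) (exists_congr fun j => ?_) <;>
    exact and_congr_right fun _ => and_congr_right fun h0 => by
      have := (hf j).resolve_left h0
      omega

/-- Let `O` be a DVR with fraction field `K`, uniformizer `π`, and normalized
additive valuation `ν` (`ν(π) = 1`).  For `f = ∑ aᵢ Xⁱ` in the annulus ring `R`: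
(1) `f` is divisible by `X` in `R` iff `ν(aᵢ) ≥ 1 - i` for all `i ≤ 0`;
(2) `f` is divisible by `πX⁻¹` in `R` iff `ν(aᵢ) ≥ 1` for all `i ≥ 0`;
consequently `f` is divisible by neither `X` nor `πX⁻¹` in `R` iff there is
`i ≥ 0` with `ν(aᵢ) = 0` and there is `i ≤ 0` with `ν(aᵢ) = -i`. -/
theorem vologodsky_stmt_2
    {O K : Type*} [CommRing O] [IsDomain O] [IsDiscreteValuationRing O]
    [Field K] [Algebra O K] [IsFractionRing O K]
    (π : O) (hπ : Irreducible π)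
    (ν : K → ℤ)
    (hν_mul : ∀ x y : K, x ≠ 0 → y ≠ 0 → ν (x * y) = ν x + ν y)
    (hν_add : ∀ x y : K, x ≠ 0 → y ≠ 0 → x + y ≠ 0 → min (ν x) (ν y) ≤ ν (x + y))
    (hν_int : ∀ x : K, x ≠ 0 → (0 ≤ ν x ↔ ∃ y : O, algebraMap O K y = x))
    (hν_π : ν (algebraMap O K π) = 1)
    (f : LaurentPolynomial K) (hf : MemAnnulusRing ν f) :
    ((∃ g : LaurentPolynomial K, MemAnnulusRing ν g ∧
        f = LaurentPolynomial.T 1 * g) ↔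
      (∀ i : ℤ, i ≤ 0 → f.coeff i = 0 ∨ 1 - i ≤ ν (f.coeff i))) ∧
    ((∃ g : LaurentPolynomial K, MemAnnulusRing ν g ∧
        f = LaurentPolynomial.C (algebraMap O K π) * LaurentPolynomial.T (-1) * g) ↔
      (∀ i : ℤ, 0 ≤ i → f.coeff i = 0 ∨ 1 ≤ ν (f.coeff i))) ∧
    ((¬ (∃ g : LaurentPolynomial K, MemAnnulusRing ν g ∧
          f = LaurentPolynomial.T 1 * g) ∧
      ¬ (∃ g : LaurentPolynomial K, MemAnnulusRing ν g ∧
          f = LaurentPolynomial.C (algebraMap O K π) * LaurentPolynomial.T (-1) * g)) ↔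
      ((∃ i : ℤ, 0 ≤ i ∧ f.coeff i ≠ 0 ∧ ν (f.coeff i) = 0) ∧
       (∃ i : ℤ, i ≤ 0 ∧ f.coeff i ≠ 0 ∧ ν (f.coeff i) = -i))) :=
  vologodsky_stmt_2_general π hπ ν hν_mul hν_π f hf
end

section
/- The O-algebra homomorphism from the polynomial ring O[X, Y] to the Laurent polynomial ring K[X, X^{−1}] sending X ↦ X and Y ↦ πX^{−1} has kernel exactly the principal ideal generated by XY − π, and its image is exactly the annulus ring R, i.e. the subring of K[X, X^{−1}] consisting of Laurent polynomials ∑_i a_i X^i with ν(a_i) ≥ max(0, −i) for all i. In particular O[X, Y]/(XY − π) is isomorphic as an O-algebra to R. -/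
/-!
Modulo `XY - π` every monomial `X^a Y^b` reduces to `π^min(a,b)` times a pure power `X^k` or
`Y^k`, and these pure powers go to `T^k` and `π^k T^(-k)`, whose exponents are pairwise distinct;
so an element of the kernel reduces to zero. For the image, `c X^a Y^b ↦ c π^b T^(a-b)` has
valuation at least `b ≥ max(0, b - a)`, and conversely `a T^i` with `ν(a) ≥ max(0, -i)` is the
image of `(a / π^n) X^m Y^n` for `m = max(i, 0)`, `n = max(-i, 0)`.
-/

open MvPolynomial
open LaurentPolynomial (T T_add T_pow single_eq_C_mul_T)

section AnnulusMap

variable {O K : Type*} [CommRing O] [CommRing K] [Algebra O K]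

noncomputable abbrev annulusMap (p : O) : MvPolynomial (Fin 2) O →ₐ[O] LaurentPolynomial K :=
  aeval fun j => if j = 0 then T 1 else LaurentPolynomial.C (algebraMap O K p) * T (-1)

theorem annulusMap_monomial (p : O) (m : Fin 2 →₀ ℕ) (c : O) :
    annulusMap (K := K) p (monomial m c) =
      AddMonoidAlgebra.single ((m 0 : ℤ) - m 1) (algebraMap O K c * algebraMap O K p ^ m 1) := by
  rw [aeval_monomial, Finsupp.prod_fintype _ _ fun _ => pow_zero _, Fin.prod_univ_two]
  simp only [if_pos, Fin.one_eq_zero_iff, OfNat.ofNat_ne_one, if_false, T_pow, mul_pow,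
    single_eq_C_mul_T, map_mul, map_pow, LaurentPolynomial.algebraMap_apply, mul_one, mul_neg_one,
    sub_eq_add_neg, T_add]
  ring

theorem annulusMap_X_zero_mul_X_one_sub_C (p : O) :
    annulusMap (K := K) p (X 0 * X 1 - C p) = 0 := by
  simp

def unmixedExponents : Set (Fin 2 →₀ ℕ) := {m | m 0 = 0 ∨ m 1 = 0}

theorem monomial_mem_restrictSupport_unmixedExponents {m : Fin 2 →₀ ℕ}
    (hm : m ∈ unmixedExponents) (c : O) : monomial m c ∈ restrictSupport O unmixedExponents :=
  (Finset.coe_subset.2 support_monomial_subset).trans (by simpa using hm)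

theorem X_zero_pow_mul_X_one_pow_mem_sup (p : O) (a b : ℕ) :
    (X 0 ^ a * X 1 ^ b : MvPolynomial (Fin 2) O) ∈
      (Ideal.span {X 0 * X 1 - C p}).restrictScalars O ⊔ restrictSupport O unmixedExponents := by
  induction b generalizing a with
  | zero =>
    rw [pow_zero, mul_one, X_pow_eq_monomial]
    refine Submodule.mem_sup_right (monomial_mem_restrictSupport_unmixedExponents ?_ _)
    simp [unmixedExponents]
  | succ b ih =>
    cases a with
    | zero =>
      rw [pow_zero, one_mul, X_pow_eq_monomial]
      refine Submodule.mem_sup_right (monomial_mem_restrictSupport_unmixedExponents ?_ _)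
      simp [unmixedExponents]
    | succ a =>
      have key : (X 0 ^ (a + 1) * X 1 ^ (b + 1) : MvPolynomial (Fin 2) O) =
          X 0 ^ a * X 1 ^ b * (X 0 * X 1 - C p) + p • (X 0 ^ a * X 1 ^ b) := by
        rw [smul_eq_C_mul]; ring
      rw [key]
      exact Submodule.add_mem _ (Submodule.mem_sup_left (Ideal.mul_mem_left _ _
        (Ideal.subset_span rfl))) (Submodule.smul_mem _ _ (ih a))

theorem mem_sup_restrictSupport_unmixedExponents (p : O) (P : MvPolynomial (Fin 2) O) :
    P ∈ (Ideal.span {X 0 * X 1 - C p}).restrictScalars O ⊔ restrictSupport O unmixedExponents := by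
  induction P using MvPolynomial.induction_on' with
  | monomial m c =>
    rw [monomial_eq, Finsupp.prod_fintype _ _ fun _ => pow_zero _, Fin.prod_univ_two,
      ← smul_eq_C_mul]
    exact Submodule.smul_mem _ c (X_zero_pow_mul_X_one_pow_mem_sup p _ _)
  | add P Q hP hQ => exact Submodule.add_mem _ hP hQ

theorem injOn_unmixedExponents : Set.InjOn (fun m => (m 0 : ℤ) - m 1) unmixedExponents := by
  intro m hm m' hm' h
  ext i
  fin_cases i <;> rcases hm with hm | hm <;> rcases hm' with hm' | hm' <;> simp_all

theorem annulusMap_eq_sum (p : O) (P : MvPolynomial (Fin 2) O) :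
    annulusMap (K := K) p P = ∑ m ∈ P.support, AddMonoidAlgebra.single ((m 0 : ℤ) - m 1)
      (algebraMap O K (coeff m P) * algebraMap O K p ^ m 1) := by
  conv_lhs => rw [P.as_sum, map_sum]
  simp only [annulusMap_monomial]

theorem coeff_annulusMap_of_mem_restrictSupport (p : O) {P : MvPolynomial (Fin 2) O}
    (hP : P ∈ restrictSupport O unmixedExponents) {m : Fin 2 →₀ ℕ} (hm : m ∈ unmixedExponents) :
    (annulusMap (K := K) p P).coeff ((m 0 : ℤ) - m 1) =
      algebraMap O K (coeff m P) * algebraMap O K p ^ m 1 := by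
  rw [annulusMap_eq_sum, AddMonoidAlgebra.coeff_sum, Finset.sum_apply']
  refine (Finset.sum_eq_single m (fun m' hm' hne => ?_) fun hmP => ?_).trans ?_
  · rw [AddMonoidAlgebra.coeff_single, Finsupp.single_eq_of_ne]
    exact fun h => hne (injOn_unmixedExponents hm (hP hm') h).symm
  · simp [notMem_support_iff.1 hmP]
  · rw [AddMonoidAlgebra.coeff_single, Finsupp.single_eq_same]

theorem span_le_ker_annulusMap (p : O) :
    Ideal.span {X 0 * X 1 - C p} ≤ RingHom.ker (annulusMap (K := K) p).toRingHom := by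
  rw [Ideal.span_le, Set.singleton_subset_iff]
  exact annulusMap_X_zero_mul_X_one_sub_C p

variable [IsDomain K] {p : O}

theorem eq_zero_of_annulusMap_eq_zero (hinj : Function.Injective (algebraMap O K)) (hp : p ≠ 0)
    {P : MvPolynomial (Fin 2) O} (hP : P ∈ restrictSupport O unmixedExponents)
    (h : annulusMap (K := K) p P = 0) : P = 0 := by
  ext m
  rw [coeff_zero]
  by_cases hm : m ∈ unmixedExponents
  · have hp' : algebraMap O K p ≠ 0 := (map_ne_zero_iff _ hinj).2 hp
    have hcoeff := coeff_annulusMap_of_mem_restrictSupport (K := K) p hP hm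
    rw [h] at hcoeff
    exact hinj (by simpa [hp'] using hcoeff.symm)
  · exact notMem_support_iff.1 fun hmP => hm (hP hmP)

theorem ker_annulusMap (hinj : Function.Injective (algebraMap O K)) (hp : p ≠ 0) :
    RingHom.ker (annulusMap (K := K) p).toRingHom = Ideal.span {X 0 * X 1 - C p} := by
  refine le_antisymm (fun P hP => ?_) (span_le_ker_annulusMap p)
  obtain ⟨q, hq, n, hn, rfl⟩ := Submodule.mem_sup.1 (mem_sup_restrictSupport_unmixedExponents p P)
  have hq0 : annulusMap (K := K) p q = 0 := span_le_ker_annulusMap p hq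
  have hn0 : annulusMap (K := K) p n = 0 := by simpa [hq0] using hP
  rw [eq_zero_of_annulusMap_eq_zero hinj hp hn hn0, add_zero]
  exact hq

end AnnulusMap

section Valuation

variable {K : Type*} [Field K] {ν : K → ℤ}

theorem valuation_pow (hν_mul : ∀ x y : K, x ≠ 0 → y ≠ 0 → ν (x * y) = ν x + ν y) {x : K}
    (hx : x ≠ 0) (n : ℕ) : ν (x ^ n) = n * ν x := by
  induction n with
  | zero =>
    have h1 := hν_mul 1 1 one_ne_zero one_ne_zero
    rw [mul_one] at h1
    simp only [pow_zero, Nat.cast_zero, zero_mul]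
    omega
  | succ n ih =>
    rw [pow_succ, hν_mul _ _ (pow_ne_zero _ hx) hx, ih]
    push_cast
    ring

theorem eq_zero_or_le_valuation_add
    (hν_add : ∀ x y : K, x ≠ 0 → y ≠ 0 → x + y ≠ 0 → min (ν x) (ν y) ≤ ν (x + y))
    {k : ℤ} {x y : K} (hx : x = 0 ∨ k ≤ ν x) (hy : y = 0 ∨ k ≤ ν y) :
    x + y = 0 ∨ k ≤ ν (x + y) := by
  by_cases hx0 : x = 0
  · simpa [hx0] using hy
  by_cases hy0 : y = 0
  · simpa [hy0] using hx
  refine or_iff_not_imp_left.2 fun hxy => ?_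
  exact (le_min (hx.resolve_left hx0) (hy.resolve_left hy0)).trans (hν_add x y hx0 hy0 hxy)

theorem MemAnnulusRing.add
    (hν_add : ∀ x y : K, x ≠ 0 → y ≠ 0 → x + y ≠ 0 → min (ν x) (ν y) ≤ ν (x + y))
    {f g : LaurentPolynomial K} (hf : MemAnnulusRing ν f) (hg : MemAnnulusRing ν g) :
    MemAnnulusRing ν (f + g) :=
  fun i => eq_zero_or_le_valuation_add hν_add (hf i) (hg i)

theorem memAnnulusRing_single {i : ℤ} {c : K} (hc : c = 0 ∨ max 0 (-i) ≤ ν c) :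
    MemAnnulusRing ν (AddMonoidAlgebra.single i c) := by
  intro j
  rw [AddMonoidAlgebra.coeff_single, Finsupp.single_apply]
  split_ifs with h
  · exact h ▸ hc
  · exact Or.inl rfl

end Valuation

structure IsNormalizedValuation (O : Type*) {K : Type*} [CommRing O] [Field K] [Algebra O K]
    (π : O) (ν : K → ℤ) : Prop where
  map_mul : ∀ x y : K, x ≠ 0 → y ≠ 0 → ν (x * y) = ν x + ν y
  min_le_map_add : ∀ x y : K, x ≠ 0 → y ≠ 0 → x + y ≠ 0 → min (ν x) (ν y) ≤ ν (x + y)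
  nonneg_iff : ∀ x : K, x ≠ 0 → (0 ≤ ν x ↔ ∃ y : O, algebraMap O K y = x)
  map_uniformizer : ν (algebraMap O K π) = 1

namespace IsNormalizedValuation

variable {O K : Type*} [CommRing O] [Field K] [Algebra O K] {π : O} {ν : K → ℤ}

theorem map_uniformizer_pow (hν : IsNormalizedValuation O π ν) (hπ : algebraMap O K π ≠ 0)
    (n : ℕ) : ν (algebraMap O K π ^ n) = n := by
  rw [valuation_pow hν.map_mul hπ, hν.map_uniformizer, mul_one]

theorem exists_algebraMap_mul_pow_eq (hν : IsNormalizedValuation O π ν)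
    (hπ : algebraMap O K π ≠ 0) {a : K} (ha : a ≠ 0) {n : ℕ} (hn : n ≤ ν a) :
    ∃ y : O, algebraMap O K y * algebraMap O K π ^ n = a := by
  have hπn := pow_ne_zero n hπ
  have hz : a / algebraMap O K π ^ n ≠ 0 := div_ne_zero ha hπn
  have hνz : 0 ≤ ν (a / algebraMap O K π ^ n) := by
    have h := hν.map_mul _ _ hz hπn
    rw [div_mul_cancel₀ a hπn, hν.map_uniformizer_pow hπ] at h
    omega
  obtain ⟨y, hy⟩ := (hν.nonneg_iff _ hz).1 hνz
  exact ⟨y, by rw [hy, div_mul_cancel₀ a hπn]⟩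

theorem memAnnulusRing_annulusMap (hν : IsNormalizedValuation O π ν)
    (hπ : algebraMap O K π ≠ 0) (P : MvPolynomial (Fin 2) O) :
    MemAnnulusRing ν (annulusMap π P) := by
  induction P using MvPolynomial.induction_on' with
  | monomial m c =>
    rw [annulusMap_monomial]
    refine memAnnulusRing_single (or_iff_not_imp_left.2 fun hcπ => ?_)
    have hc : algebraMap O K c ≠ 0 := left_ne_zero_of_mul hcπ
    have hνc := (hν.nonneg_iff _ hc).2 ⟨c, rfl⟩
    rw [hν.map_mul _ _ hc (pow_ne_zero _ hπ), hν.map_uniformizer_pow hπ]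
    omega
  | add P Q hP hQ =>
    rw [map_add]
    exact hP.add hν.min_le_map_add hQ

theorem single_mem_range_annulusMap (hν : IsNormalizedValuation O π ν)
    (hπ : algebraMap O K π ≠ 0) {i : ℤ} {c : K} (hc : c = 0 ∨ max 0 (-i) ≤ ν c) :
    AddMonoidAlgebra.single i c ∈ (annulusMap π).range := by
  by_cases hc0 : c = 0
  · rw [hc0, AddMonoidAlgebra.single_zero]
    exact zero_mem _
  have hn : ((-i).toNat : ℤ) ≤ ν c := by
    have := hc.resolve_left hc0
    omega
  obtain ⟨y, hy⟩ := hν.exists_algebraMap_mul_pow_eq hπ hc0 hn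
  refine ⟨monomial (Finsupp.single 0 i.toNat + Finsupp.single 1 (-i).toNat) y, ?_⟩
  simp [annulusMap_monomial, hy]

theorem mem_range_annulusMap_iff (hν : IsNormalizedValuation O π ν)
    (hπ : algebraMap O K π ≠ 0) (f : LaurentPolynomial K) :
    f ∈ (annulusMap π).range ↔ MemAnnulusRing ν f := by
  refine ⟨fun ⟨P, hP⟩ => hP ▸ hν.memAnnulusRing_annulusMap hπ P, fun hf => ?_⟩
  rw [← AddMonoidAlgebra.sum_coeff_single f]
  exact Subalgebra.sum_mem _ fun i _ => hν.single_mem_range_annulusMap hπ (hf i)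

end IsNormalizedValuation

theorem vologodsky_stmt_3_general
    {O K : Type*} [CommRing O]
    [Field K] [Algebra O K] [IsFractionRing O K]
    (π : O) (hπ : Irreducible π)
    (ν : K → ℤ)
    (hν_mul : ∀ x y : K, x ≠ 0 → y ≠ 0 → ν (x * y) = ν x + ν y)
    (hν_add : ∀ x y : K, x ≠ 0 → y ≠ 0 → x + y ≠ 0 → min (ν x) (ν y) ≤ ν (x + y))
    (hν_int : ∀ x : K, x ≠ 0 → (0 ≤ ν x ↔ ∃ y : O, algebraMap O K y = x))
    (hν_π : ν (algebraMap O K π) = 1)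
    (φ : MvPolynomial (Fin 2) O →ₐ[O] LaurentPolynomial K)
    (hφ : φ = MvPolynomial.aeval
      (fun j : Fin 2 => if j = 0 then LaurentPolynomial.T 1
        else LaurentPolynomial.C (algebraMap O K π) * LaurentPolynomial.T (-1))) :
    RingHom.ker φ.toRingHom =
        Ideal.span {MvPolynomial.X 0 * MvPolynomial.X 1 - MvPolynomial.C π} ∧
      (∀ f : LaurentPolynomial K, f ∈ Set.range φ ↔ MemAnnulusRing ν f) ∧
      Nonempty ((MvPolynomial (Fin 2) O ⧸
          Ideal.span {MvPolynomial.X 0 * MvPolynomial.X 1 - MvPolynomial.C π})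
        ≃ₐ[O] φ.range) := by
  obtain rfl : φ = annulusMap π := hφ
  have hinj : Function.Injective (algebraMap O K) := IsFractionRing.injective O K
  have hπ0 : algebraMap O K π ≠ 0 := (map_ne_zero_iff _ hinj).2 hπ.ne_zero
  have hν : IsNormalizedValuation O π ν := ⟨hν_mul, hν_add, hν_int, hν_π⟩
  have hker := ker_annulusMap hinj hπ.ne_zero
  refine ⟨hker, fun f => hν.mem_range_annulusMap_iff hπ0 f,
    ⟨(Ideal.quotientEquivAlgOfEq O hker.symm).trans (Ideal.quotientKerEquivRange _)⟩⟩

/-- Let `O` be a DVR with fraction field `K`, uniformizer `π`, and normalized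
additive valuation `ν` (`ν(π) = 1`).  The `O`-algebra homomorphism
`O[X,Y] → K[X,X⁻¹]` with `X ↦ X`, `Y ↦ πX⁻¹` has kernel the principal ideal
`(XY - π)` and image exactly the annulus ring `R`.  In particular
`O[X,Y]/(XY - π) ≅ R` as `O`-algebras. -/
theorem vologodsky_stmt_3
    {O K : Type*} [CommRing O] [IsDomain O] [IsDiscreteValuationRing O]
    [Field K] [Algebra O K] [IsFractionRing O K]
    (π : O) (hπ : Irreducible π)
    (ν : K → ℤ)
    (hν_mul : ∀ x y : K, x ≠ 0 → y ≠ 0 → ν (x * y) = ν x + ν y)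
    (hν_add : ∀ x y : K, x ≠ 0 → y ≠ 0 → x + y ≠ 0 → min (ν x) (ν y) ≤ ν (x + y))
    (hν_int : ∀ x : K, x ≠ 0 → (0 ≤ ν x ↔ ∃ y : O, algebraMap O K y = x))
    (hν_π : ν (algebraMap O K π) = 1)
    (φ : MvPolynomial (Fin 2) O →ₐ[O] LaurentPolynomial K)
    (hφ : φ = MvPolynomial.aeval
      (fun j : Fin 2 => if j = 0 then LaurentPolynomial.T 1
        else LaurentPolynomial.C (algebraMap O K π) * LaurentPolynomial.T (-1))) :
    RingHom.ker φ.toRingHom =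
        Ideal.span {MvPolynomial.X 0 * MvPolynomial.X 1 - MvPolynomial.C π} ∧
      (∀ f : LaurentPolynomial K, f ∈ Set.range φ ↔ MemAnnulusRing ν f) ∧
      Nonempty ((MvPolynomial (Fin 2) O ⧸
          Ideal.span {MvPolynomial.X 0 * MvPolynomial.X 1 - MvPolynomial.C π})
        ≃ₐ[O] φ.range) :=
  vologodsky_stmt_3_general π hπ ν hν_mul hν_add hν_int hν_π φ hφ
end
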